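/- Let α ∈ (−1,∞), p ∈ (1,∞), and β ∈ (−α−1, (α+1)(p−1)). Then the power weight ω(y) = y^β on ℝ_+ belongs to A_p(ℝ_+,μ) ∩ M_p(μ), i.e., both [ω]_{A_p(ℝ_+,μ)} and [ω]_{M_p(μ)} are finite. -/

import Mathlib

open MeasureTheory ENNReal Set Filter Metric

noncomputable section

/-- Euclidean space of (paper) dimension `d+1 ≥ 1`. -/
abbrev E (d : ℕ) : Type := EuclideanSpace ℝ (Fin (d + 1))

/-- Space-time points `z = (t, x)`. -/
abbrev Pt (d : ℕ) : Type := ℝ × E d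

/-- Tangential space `ℝ^{d}` (first `d` coordinates). -/
abbrev E' (d : ℕ) : Type := EuclideanSpace ℝ (Fin d)

/-- Last (vertical) coordinate `x_d`. -/
def xd (d : ℕ) (x : E d) : ℝ := x (Fin.last d)

/-- Tangential part `x'` of a point. -/
def tang (d : ℕ) (x : E d) : E' d := WithLp.toLp 2 (fun i : Fin d => x i.castSucc)

/-- Glue a tangential point `x'` and a last coordinate `s` into a point of `E d`. -/
def glue (d : ℕ) (y : E' d) (s : ℝ) : E d :=
  WithLp.toLp 2 (Fin.snoc (α := fun _ => ℝ) (WithLp.ofLp y) s)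

/-- The spatial weighted measure `μ(dx) = x_d^α dx` on the upper half space. -/
def muS (d : ℕ) (α : ℝ) : Measure (E d) :=
  ((volume : Measure (E d)).restrict {x | 0 < xd d x}).withDensity
    fun x => ENNReal.ofReal (xd d x ^ α)

/-- The space-time weighted measure `μ(dz) = x_d^α dx dt` on the upper half space. -/
def mu (d : ℕ) (α : ℝ) : Measure (Pt d) :=
  ((volume : Measure (Pt d)).restrict {z : Pt d | 0 < xd d z.2}).withDensity
    fun z => ENNReal.ofReal (xd d z.2 ^ α)

/-- Upper half ball `B_r^+(x₀)`. -/
def Bplus (d : ℕ) (r : ℝ) (x₀ : E d) : Set (E d) := {x | 0 < xd d x ∧ dist x x₀ < r}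

/-- Upper half parabolic cylinder `Q_r^+(z₀)`. -/
def Qplus (d : ℕ) (r : ℝ) (z₀ : Pt d) : Set (Pt d) :=
  (Ioo (z₀.1 - r ^ 2) z₀.1) ×ˢ (Bplus d r z₀.2)

/-- Full parabolic cylinder `Q_r(z₀)` (used as the class of admissible supports of
test functions for the conormal problem in `Q_r^+(z₀)`). -/
def Qfull (d : ℕ) (r : ℝ) (z₀ : Pt d) : Set (Pt d) :=
  (Ioo (z₀.1 - r ^ 2) z₀.1) ×ˢ (Metric.ball z₀.2 r)

/-- The domain `Ω_T = (-∞,T) × ℝ^d_+`, `T ∈ (-∞, +∞]`. -/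
def OmegaT (d : ℕ) (T : EReal) : Set (Pt d) :=
  {z : Pt d | (z.1 : EReal) < T ∧ 0 < xd d z.2}

/-- Admissible supports of test functions for the conormal problem in `Ω_T`
(test functions may be nonzero on `{x_d = 0}`). -/
def OmegaTest (d : ℕ) (T : EReal) : Set (Pt d) := {z : Pt d | (z.1 : EReal) < T}

/-- The `L_p(D,μ)`-norm (valued in `ℝ≥0∞`). -/
def LpN (d : ℕ) (α p : ℝ) (D : Set (Pt d)) {F : Type*} [NormedAddCommGroup F]
    (g : Pt d → F) : ℝ≥0∞ :=
  eLpNorm g (ENNReal.ofReal p) ((mu d α).restrict D)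

/-- Membership in `L_p(D,μ)`. -/
def MemLpD (d : ℕ) (α p : ℝ) (D : Set (Pt d)) {F : Type*} [NormedAddCommGroup F]
    (g : Pt d → F) : Prop :=
  MemLp g (ENNReal.ofReal p) ((mu d α).restrict D)

/-- Smooth compactly supported test functions with support in `U`. -/
def IsTest (d : ℕ) (U : Set (Pt d)) (φ : Pt d → ℝ) : Prop :=
  ContDiff ℝ (⊤ : ℕ∞) φ ∧ HasCompactSupport φ ∧ tsupport φ ⊆ U

/-- Time derivative `∂_t φ` of a (smooth) function. -/
def Dt (d : ℕ) (φ : Pt d → ℝ) (z : Pt d) : ℝ := fderiv ℝ φ z (1, 0)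

/-- Spatial derivative `D_i φ` of a (smooth) function. -/
def Dxi (d : ℕ) (i : Fin (d + 1)) (φ : Pt d → ℝ) (z : Pt d) : ℝ :=
  fderiv ℝ φ z (0, EuclideanSpace.single i 1)

/-- `Du` is the (distributional) spatial gradient of `u` on `D`. -/
def IsWeakGrad (d : ℕ) (D : Set (Pt d)) (u : Pt d → ℝ) (Du : Pt d → E d) : Prop :=
  ∀ φ : Pt d → ℝ, IsTest d (interior D) φ → ∀ i,
    ∫ z in D, u z * Dxi d i φ z = -∫ z in D, Du z i * φ z

/-- `ut` is the (distributional) time derivative of `u` on `D`. -/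
def IsWeakTimeDeriv (d : ℕ) (D : Set (Pt d)) (u ut : Pt d → ℝ) : Prop :=
  ∀ φ : Pt d → ℝ, IsTest d (interior D) φ →
    ∫ z in D, u z * Dt d φ z = -∫ z in D, ut z * φ z

/-- Second order derivatives, recorded as a Euclidean matrix. -/
abbrev M2 (d : ℕ) : Type := EuclideanSpace ℝ (Fin (d + 1) × Fin (d + 1))

/-- `D2u` is the (distributional) Hessian of `u` (whose gradient is `Du`) on `D`. -/
def IsWeakHess (d : ℕ) (D : Set (Pt d)) (Du : Pt d → E d) (D2u : Pt d → M2 d) : Prop :=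
  ∀ φ : Pt d → ℝ, IsTest d (interior D) φ → ∀ i j,
    ∫ z in D, Du z j * Dxi d i φ z = -∫ z in D, D2u z (i, j) * φ z

/-- The representation `u_t = D_i G_i + G_0/x_d + g` in the sense of distributions on `D`. -/
def TimeDerivRep (d : ℕ) (D : Set (Pt d)) (u : Pt d → ℝ) (G : Pt d → E d)
    (G0 g : Pt d → ℝ) : Prop :=
  ∀ φ : Pt d → ℝ, IsTest d (interior D) φ →
    -∫ z in D, u z * Dt d φ z =
      (-∑ i, ∫ z in D, G z i * Dxi d i φ z) + ∫ z in D, (G0 z / xd d z.2 + g z) * φ z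

/-- Membership `u ∈ 𝓗¹_p(D,μ)`, with weak spatial gradient `Du`. -/
def MemH1 (d : ℕ) (α p : ℝ) (D : Set (Pt d)) (u : Pt d → ℝ) (Du : Pt d → E d) : Prop :=
  MemLpD d α p D u ∧ MemLpD d α p D Du ∧ IsWeakGrad d D u Du ∧
    ∃ G G0 g, MemLpD d α p D G ∧ MemLpD d α p D G0 ∧ MemLpD d α p D g ∧
      TimeDerivRep d D u G G0 g

/-- Membership `u ∈ W^{1,2}_p(D,μ)`, with weak derivatives `ut`, `Du`, `D2u`. -/
def MemW12 (d : ℕ) (α p : ℝ) (D : Set (Pt d)) (u ut : Pt d → ℝ) (Du : Pt d → E d)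
    (D2u : Pt d → M2 d) : Prop :=
  MemLpD d α p D u ∧ MemLpD d α p D ut ∧ MemLpD d α p D Du ∧ MemLpD d α p D D2u ∧
    IsWeakTimeDeriv d D u ut ∧ IsWeakGrad d D u Du ∧ IsWeakHess d D Du D2u

/-- The `W^{1,2}_p(D,μ)`-norm. -/
def W12N (d : ℕ) (α p : ℝ) (D : Set (Pt d)) (u ut : Pt d → ℝ) (Du : Pt d → E d)
    (D2u : Pt d → M2 d) : ℝ≥0∞ :=
  LpN d α p D u + LpN d α p D ut + LpN d α p D Du + LpN d α p D D2u

/-- Coefficient matrices on space-time. -/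
abbrev Coeffs (d : ℕ) : Type := Fin (d + 1) → Fin (d + 1) → Pt d → ℝ

/-- Uniform ellipticity and boundedness with constant `κ` on `D`. -/
def UnifElliptic (d : ℕ) (κ : ℝ) (D : Set (Pt d)) (a : Coeffs d) : Prop :=
  ∀ z ∈ D, (∀ ξ : E d, κ * ‖ξ‖ ^ 2 ≤ ∑ i, ∑ j, a i j z * ξ i * ξ j) ∧
    ∀ i j, |a i j z| ≤ κ⁻¹

/-- Bounds `κ ≤ a₀, c₀ ≤ κ⁻¹` on `D`. -/
def CoeffBnd (d : ℕ) (κ : ℝ) (D : Set (Pt d)) (a0 c0 : Pt d → ℝ) : Prop :=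
  ∀ z ∈ D, κ ≤ a0 z ∧ a0 z ≤ κ⁻¹ ∧ κ ≤ c0 z ∧ c0 z ≤ κ⁻¹

/-- `u` (with weak gradient `Du`) is a weak solution of the conormal problem
`x_d^α (a₀ u_t + λ c₀ u) - D_i (x_d^α (a_{ij} D_j u - F_i)) = rhs ⋅ x_d^α f` on `D`,
with the conormal boundary condition encoded by the class `U` of admissible
supports of test functions (which may touch `{x_d = 0}`). -/
def WeakSolDiv (d : ℕ) (α : ℝ) (a : Coeffs d) (a0 c0 : Pt d → ℝ) (lam rhs : ℝ)
    (u : Pt d → ℝ) (Du : Pt d → E d) (F : Pt d → E d) (f : Pt d → ℝ)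
    (D U : Set (Pt d)) : Prop :=
  ∀ φ : Pt d → ℝ, IsTest d U φ →
    (∫ z in D, (-(a0 z * u z * Dt d φ z) + lam * c0 z * u z * φ z) ∂(mu d α)) +
      (∑ i, ∫ z in D, ((∑ j, a i j z * Du z j) - F z i) * Dxi d i φ z ∂(mu d α)) =
      rhs * ∫ z in D, f z * φ z ∂(mu d α)

/-- The average `[c]_{r,z₀}(s)` of `c(·,·,s)` in `(t,x')` over `(t₀-r²,t₀) × B'_r(x₀')`. -/
def coeffAvg (d : ℕ) (c : Pt d → ℝ) (r : ℝ) (z₀ : Pt d) (s : ℝ) : ℝ :=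
  ⨍ w in (Ioo (z₀.1 - r ^ 2) z₀.1) ×ˢ (Metric.ball (tang d z₀.2) r),
    c (w.1, glue d w.2 s)

/-- Mean oscillation condition for a single scalar coefficient:
`⨍_{Q_r^+(z₀)} |c - [c]_{r,z₀}(x_d)| dμ ≤ γ₀` for all `r ∈ (0,R₀]` and admissible `z₀`. -/
def OscA (d : ℕ) (α γ₀ R₀ : ℝ) (c : Pt d → ℝ) : Prop :=
  ∀ r : ℝ, 0 < r → r ≤ R₀ → ∀ z₀ : Pt d, 0 ≤ xd d z₀.2 →
    (∫⁻ z in Qplus d r z₀, ENNReal.ofReal |c z - coeffAvg d c r z₀ (xd d z.2)| ∂(mu d α))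
      ≤ ENNReal.ofReal γ₀ * mu d α (Qplus d r z₀)

/-- Assumption (γ₀,R₀) for the leading coefficients. -/
def OscAssump (d : ℕ) (α γ₀ R₀ : ℝ) (a : Coeffs d) : Prop :=
  ∀ i j, OscA d α γ₀ R₀ (a i j)

/-- Assumption (γ₀,R₀) for non-divergence form equations (on `a_{ij}`, `a₀`, `c₀`). -/
def OscAssumpND (d : ℕ) (α γ₀ R₀ : ℝ) (a : Coeffs d) (a0 c0 : Pt d → ℝ) : Prop :=
  ∀ i j, ∀ r : ℝ, 0 < r → r ≤ R₀ → ∀ z₀ : Pt d, 0 ≤ xd d z₀.2 →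
    (∫⁻ z in Qplus d r z₀,
        ENNReal.ofReal |a i j z - coeffAvg d (a i j) r z₀ (xd d z.2)| ∂(mu d α)) +
      (∫⁻ z in Qplus d r z₀,
        ENNReal.ofReal (|a0 z - coeffAvg d a0 r z₀ (xd d z.2)| +
          |c0 z - coeffAvg d c0 r z₀ (xd d z.2)|) ∂(mu d α))
      ≤ ENNReal.ofReal γ₀ * mu d α (Qplus d r z₀)

/-- The μ-average of an `ℝ≥0∞`-valued function over a space-time set. -/
def avgQ (d : ℕ) (α : ℝ) (D : Set (Pt d)) (g : Pt d → ℝ≥0∞) : ℝ≥0∞ :=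
  (mu d α D)⁻¹ * ∫⁻ z in D, g z ∂(mu d α)

/-- Parabolic Hölder seminorm `[g]_{C^{1/2,1}(D)}`. -/
def hSemi (d : ℕ) (D : Set (Pt d)) {F : Type*} [NormedAddCommGroup F]
    (g : Pt d → F) : ℝ≥0∞ :=
  ⨆ z ∈ D, ⨆ w ∈ D,
    ENNReal.ofReal (‖g z - g w‖ / (|z.1 - w.1| ^ (2⁻¹ : ℝ) + dist z.2 w.2))

/-- `lim_{x_d → 0+} x_d^α g(t, x', x_d) = 0` for a.e. `(t,x')` in `S`. -/
def FlatLimitZero (d : ℕ) (α : ℝ) (g : Pt d → ℝ) (S : Set (ℝ × E' d)) : Prop :=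
  ∀ᵐ w : ℝ × E' d ∂volume, w ∈ S →
    Tendsto (fun s : ℝ => s ^ α * g (w.1, glue d w.2 s)) (nhdsWithin 0 (Ioi 0)) (nhds 0)

section Elliptic

/-- The elliptic `L_p`-norm. -/
def LpNS (d : ℕ) (α p : ℝ) (D : Set (E d)) {F : Type*} [NormedAddCommGroup F]
    (g : E d → F) : ℝ≥0∞ :=
  eLpNorm g (ENNReal.ofReal p) ((muS d α).restrict D)

/-- Elliptic membership in `L_p(D,μ)`. -/
def MemLpS (d : ℕ) (α p : ℝ) (D : Set (E d)) {F : Type*} [NormedAddCommGroup F]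
    (g : E d → F) : Prop :=
  MemLp g (ENNReal.ofReal p) ((muS d α).restrict D)

/-- Elliptic test functions. -/
def IsTestS (d : ℕ) (U : Set (E d)) (φ : E d → ℝ) : Prop :=
  ContDiff ℝ (⊤ : ℕ∞) φ ∧ HasCompactSupport φ ∧ tsupport φ ⊆ U

/-- Spatial derivative. -/
def DxiS (d : ℕ) (i : Fin (d + 1)) (φ : E d → ℝ) (x : E d) : ℝ :=
  fderiv ℝ φ x (EuclideanSpace.single i 1)

/-- Elliptic weak gradient on `D`. -/
def IsWeakGradS (d : ℕ) (D : Set (E d)) (u : E d → ℝ) (Du : E d → E d) : Prop :=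
  ∀ φ : E d → ℝ, IsTestS d (interior D) φ → ∀ i,
    ∫ x in D, u x * DxiS d i φ x = -∫ x in D, Du x i * φ x

/-- Membership `u ∈ W¹_p(D,μ)` with weak gradient `Du`. -/
def MemW1S (d : ℕ) (α p : ℝ) (D : Set (E d)) (u : E d → ℝ) (Du : E d → E d) : Prop :=
  MemLpS d α p D u ∧ MemLpS d α p D Du ∧ IsWeakGradS d D u Du

/-- Elliptic coefficient matrices. -/
abbrev CoeffsS (d : ℕ) : Type := Fin (d + 1) → Fin (d + 1) → E d → ℝ

/-- Elliptic uniform ellipticity/boundedness. -/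
def UnifEllipticS (d : ℕ) (κ : ℝ) (D : Set (E d)) (a : CoeffsS d) : Prop :=
  ∀ x ∈ D, (∀ ξ : E d, κ * ‖ξ‖ ^ 2 ≤ ∑ i, ∑ j, a i j x * ξ i * ξ j) ∧
    ∀ i j, |a i j x| ≤ κ⁻¹

/-- Weak solution of the elliptic conormal problem
`-D_i(x_d^α (a_{ij} D_j u - F_i)) = x_d^α f` on `D`, with admissible test supports `U`. -/
def WeakSolDivS (d : ℕ) (α : ℝ) (a : CoeffsS d) (u : E d → ℝ) (Du : E d → E d)
    (F : E d → E d) (f : E d → ℝ) (D U : Set (E d)) : Prop :=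
  ∀ φ : E d → ℝ, IsTestS d U φ →
    (∑ i, ∫ x in D, ((∑ j, a i j x * Du x j) - F x i) * DxiS d i φ x ∂(muS d α)) =
      ∫ x in D, f x * φ x ∂(muS d α)

/-- The elliptic average `[c]_{r,x₀}(s)` of `c(·,s)` in `x'` over `B'_r(x₀')`. -/
def coeffAvgS (d : ℕ) (c : E d → ℝ) (r : ℝ) (x₀ : E d) (s : ℝ) : ℝ :=
  ⨍ y in Metric.ball (tang d x₀) r, c (glue d y s)

/-- Elliptic Assumption (γ₀,R₀). -/
def OscAssumpS (d : ℕ) (α γ₀ R₀ : ℝ) (a : CoeffsS d) : Prop :=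
  ∀ i j, ∀ r : ℝ, 0 < r → r ≤ R₀ → ∀ x₀ : E d, 0 ≤ xd d x₀ →
    (∫⁻ x in Bplus d r x₀,
        ENNReal.ofReal |a i j x - coeffAvgS d (a i j) r x₀ (xd d x)| ∂(muS d α))
      ≤ ENNReal.ofReal γ₀ * muS d α (Bplus d r x₀)

end Elliptic

section Weights

/-- Weighted mixed-norm `L_{q,p}(Ω_T, ω dμ)`-norm, `ω(t,x) = ω₀(t) ω₁(x)`. -/
def LqpN (d : ℕ) (α q p : ℝ) (ω₀ : ℝ → ℝ) (ω₁ : E d → ℝ) (T : EReal)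
    {F : Type*} [NormedAddCommGroup F] (g : Pt d → F) : ℝ≥0∞ :=
  (∫⁻ t in {t : ℝ | (t : EReal) < T},
      (∫⁻ x, ENNReal.ofReal (‖g (t, x)‖ ^ p * ω₁ x) ∂(muS d α)) ^ (q / p) *
        ENNReal.ofReal (ω₀ t)) ^ (1 / q)

/-- Membership in `L_{q,p}(Ω_T, ω dμ)`. -/
def MemLqp (d : ℕ) (α q p : ℝ) (ω₀ : ℝ → ℝ) (ω₁ : E d → ℝ) (T : EReal)
    {F : Type*} [NormedAddCommGroup F] (g : Pt d → F) : Prop :=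
  AEStronglyMeasurable g ((mu d α).restrict (OmegaT d T)) ∧ LqpN d α q p ω₀ ω₁ T g < ⊤

/-- Membership `u ∈ 𝓗¹_{q,p}(Ω_T, ω dμ)` with weak gradient `Du`. -/
def MemH1qp (d : ℕ) (α q p : ℝ) (ω₀ : ℝ → ℝ) (ω₁ : E d → ℝ) (T : EReal)
    (u : Pt d → ℝ) (Du : Pt d → E d) : Prop :=
  MemLqp d α q p ω₀ ω₁ T u ∧ MemLqp d α q p ω₀ ω₁ T Du ∧
    IsWeakGrad d (OmegaT d T) u Du ∧
    ∃ G G0 g, MemLqp d α q p ω₀ ω₁ T G ∧ MemLqp d α q p ω₀ ω₁ T G0 ∧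
      MemLqp d α q p ω₀ ω₁ T g ∧ TimeDerivRep d (OmegaT d T) u G G0 g

/-- Membership `u ∈ W^{1,2}_{q,p}(Ω_T, ω dμ)` with weak derivatives `ut, Du, D2u`. -/
def MemW12qp (d : ℕ) (α q p : ℝ) (ω₀ : ℝ → ℝ) (ω₁ : E d → ℝ) (T : EReal)
    (u ut : Pt d → ℝ) (Du : Pt d → E d) (D2u : Pt d → M2 d) : Prop :=
  MemLqp d α q p ω₀ ω₁ T u ∧ MemLqp d α q p ω₀ ω₁ T ut ∧
    MemLqp d α q p ω₀ ω₁ T Du ∧ MemLqp d α q p ω₀ ω₁ T D2u ∧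
    IsWeakTimeDeriv d (OmegaT d T) u ut ∧ IsWeakGrad d (OmegaT d T) u Du ∧
    IsWeakHess d (OmegaT d T) Du D2u

/-- The Muckenhoupt constant `[ω]_{A_q(ℝ)}` (over parabolic time intervals). -/
def ApTimeConst (q : ℝ) (ω : ℝ → ℝ) : ℝ≥0∞ :=
  ⨆ (r : ℝ) (_ : 0 < r) (t : ℝ),
    ((volume (Ioo (t - r ^ 2) (t + r ^ 2)))⁻¹ *
        ∫⁻ s in Ioo (t - r ^ 2) (t + r ^ 2), ENNReal.ofReal (ω s)) *
      ((volume (Ioo (t - r ^ 2) (t + r ^ 2)))⁻¹ *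
        ∫⁻ s in Ioo (t - r ^ 2) (t + r ^ 2), ENNReal.ofReal (ω s ^ (1 / (1 - q)))) ^ (q - 1)

/-- The Muckenhoupt constant `[ω]_{A_p(ℝ^d_+, μ)}` (over upper half balls). -/
def ApHalfConst (d : ℕ) (α p : ℝ) (ω : E d → ℝ) : ℝ≥0∞ :=
  ⨆ (r : ℝ) (_ : 0 < r) (x : E d) (_ : 0 ≤ xd d x),
    ((muS d α (Bplus d r x))⁻¹ *
        ∫⁻ y in Bplus d r x, ENNReal.ofReal (ω y) ∂(muS d α)) *
      ((muS d α (Bplus d r x))⁻¹ *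
        ∫⁻ y in Bplus d r x, ENNReal.ofReal (ω y ^ (1 / (1 - p))) ∂(muS d α)) ^ (p - 1)

/-- The Muckenhoupt constant `[ω]_{A_p(ℝ^{d-1})}` (usual balls, Lebesgue measure). -/
def ApEuclConst (d : ℕ) (p : ℝ) (ω : E' d → ℝ) : ℝ≥0∞ :=
  ⨆ (r : ℝ) (_ : 0 < r) (x : E' d),
    ((volume (Metric.ball x r))⁻¹ * ∫⁻ y in Metric.ball x r, ENNReal.ofReal (ω y)) *
      ((volume (Metric.ball x r))⁻¹ *
        ∫⁻ y in Metric.ball x r, ENNReal.ofReal (ω y ^ (1 / (1 - p)))) ^ (p - 1)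

/-- The one-dimensional measure `μ(dy) = y^α dy` on `ℝ_+`. -/
def mu1 (α : ℝ) : Measure ℝ :=
  ((volume : Measure ℝ).restrict (Ioi (0 : ℝ))).withDensity
    fun y => ENNReal.ofReal (y ^ α)

/-- The Muckenhoupt constant `[ω]_{A_p(ℝ_+, μ)}` over the half intervals
`I_r^+(x) = (max(x-r,0), x+r)`, `x ≥ 0`. -/
def ApHalfLineConst (α p : ℝ) (ω : ℝ → ℝ) : ℝ≥0∞ :=
  ⨆ (r : ℝ) (_ : 0 < r) (x : ℝ) (_ : 0 ≤ x),
    ((mu1 α (Ioo (max (x - r) 0) (x + r)))⁻¹ *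
        ∫⁻ y in Ioo (max (x - r) 0) (x + r), ENNReal.ofReal (ω y) ∂(mu1 α)) *
      ((mu1 α (Ioo (max (x - r) 0) (x + r)))⁻¹ *
        ∫⁻ y in Ioo (max (x - r) 0) (x + r),
          ENNReal.ofReal (ω y ^ (1 / (1 - p))) ∂(mu1 α)) ^ (p - 1)

/-- The constant `[ω]_{M_p(μ)}`. -/
def MpConst (α p : ℝ) (ω : ℝ → ℝ) : ℝ≥0∞ :=
  ⨆ (r : ℝ) (_ : 0 < r),
    (∫⁻ y in Ioi r, ENNReal.ofReal (y ^ (-(p * (α + 1))) * ω y) ∂(mu1 α)) ^ (1 / p) *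
      (∫⁻ y in Ioo 0 r, ENNReal.ofReal (ω y ^ (-(1 / (p - 1)))) ∂(mu1 α)) ^ (1 - 1 / p)

end Weights

end

/-!
On an interval `(a, b)` with `0 ≤ a`, the `μ`-integrals of powers `y^δ` are explicit
(`∫ y^(α+δ) dy`), finite for `α + δ > -1`. The `A_p` product involves `δ = β` and the dual
exponent `δ = -β/(p-1)`; the hypotheses on `β` are exactly what makes both locally integrable.
If `2a ≤ b` the interval carries a fixed fraction of `μ(0, b)`, so each average is `≲ b^δ`;
if `b < 2a` then `y ≍ a` on the interval, so each average is `≲ a^δ`. Since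
`β + (-β/(p-1))(p-1) = 0`, the powers of `b` (resp. `a`) cancel in the product. For `M_p` both
integrals are explicit multiples of powers of `r` whose exponents cancel in the same way.
-/

namespace PowerWeight

variable {α p β : ℝ}

lemma setLIntegral_mu1 {s : Set ℝ} (hs : MeasurableSet s) (hs₀ : s ⊆ Ioi 0)
    {f : ℝ → ℝ≥0∞} (hf : Measurable f) :
    ∫⁻ y in s, f y ∂(mu1 α) = ∫⁻ y in s, ENNReal.ofReal (y ^ α) * f y := by
  rw [mu1, setLIntegral_withDensity_eq_setLIntegral_mul _ (by fun_prop) hf hs,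
    Measure.restrict_restrict hs, inter_eq_left.mpr hs₀]
  rfl

lemma setLIntegral_rpow_mu1 {s : Set ℝ} (hs : MeasurableSet s) (hs₀ : s ⊆ Ioi 0) (γ : ℝ) :
    ∫⁻ y in s, ENNReal.ofReal (y ^ γ) ∂(mu1 α) = ∫⁻ y in s, ENNReal.ofReal (y ^ (α + γ)) := by
  rw [setLIntegral_mu1 hs hs₀ (by fun_prop)]
  refine setLIntegral_congr_fun hs fun y hy => ?_
  have hy₀ : 0 < y := hs₀ hy
  rw [← ENNReal.ofReal_mul (by positivity), Real.rpow_add hy₀]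

lemma lintegral_rpow_Ioo {δ a b : ℝ} (hδ : -1 < δ) (ha : 0 ≤ a) (hab : a ≤ b) :
    ∫⁻ y in Ioo a b, ENNReal.ofReal (y ^ δ) =
      ENNReal.ofReal ((b ^ (δ + 1) - a ^ (δ + 1)) / (δ + 1)) := by
  have hint : IntegrableOn (fun y : ℝ => y ^ δ) (Ioo a b) :=
    (intervalIntegrable_iff_integrableOn_Ioo_of_le hab).mp
      (intervalIntegral.intervalIntegrable_rpow' hδ)
  rw [← ofReal_integral_eq_lintegral_ofReal hint
      ((ae_restrict_mem measurableSet_Ioo).mono fun y hy => by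
        have : 0 < y := ha.trans_lt hy.1
        positivity),
    ← integral_Ioc_eq_integral_Ioo, ← intervalIntegral.integral_of_le hab,
    integral_rpow (Or.inl hδ)]

lemma lintegral_rpow_Ioi {δ r : ℝ} (hδ : δ < -1) (hr : 0 < r) :
    ∫⁻ y in Ioi r, ENNReal.ofReal (y ^ δ) = ENNReal.ofReal (-r ^ (δ + 1) / (δ + 1)) := by
  rw [← ofReal_integral_eq_lintegral_ofReal (integrableOn_Ioi_rpow_of_lt hδ hr)
      ((ae_restrict_mem measurableSet_Ioi).mono fun y hy => by
        have : 0 < y := hr.trans hy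
        positivity),
    integral_Ioi_rpow_of_lt hδ hr]

lemma setLIntegral_rpow_mu1_Ioo {γ a b : ℝ} (h : -1 < α + γ) (ha : 0 ≤ a) (hab : a ≤ b) :
    ∫⁻ y in Ioo a b, ENNReal.ofReal (y ^ γ) ∂(mu1 α) =
      ENNReal.ofReal ((b ^ (α + γ + 1) - a ^ (α + γ + 1)) / (α + γ + 1)) := by
  rw [setLIntegral_rpow_mu1 measurableSet_Ioo (fun y hy => ha.trans_lt hy.1),
    lintegral_rpow_Ioo h ha hab]

lemma setLIntegral_rpow_mu1_Ioi {γ r : ℝ} (h : α + γ < -1) (hr : 0 < r) :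
    ∫⁻ y in Ioi r, ENNReal.ofReal (y ^ γ) ∂(mu1 α) =
      ENNReal.ofReal (-r ^ (α + γ + 1) / (α + γ + 1)) := by
  rw [setLIntegral_rpow_mu1 measurableSet_Ioi (fun y hy => hr.trans hy), lintegral_rpow_Ioi h hr]

lemma mu1_Ioo (hα : -1 < α) {a b : ℝ} (ha : 0 ≤ a) (hab : a ≤ b) :
    mu1 α (Ioo a b) = ENNReal.ofReal ((b ^ (α + 1) - a ^ (α + 1)) / (α + 1)) := by
  simpa using setLIntegral_rpow_mu1_Ioo (α := α) (γ := 0) (by simpa using hα) ha hab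

lemma rpow_le_two_rpow_abs_mul_rpow {a y : ℝ} (γ : ℝ) (ha : 0 < a) (hay : a ≤ y)
    (hy : y ≤ 2 * a) : y ^ γ ≤ 2 ^ |γ| * a ^ γ := by
  rcases le_total 0 γ with hγ | hγ
  · calc y ^ γ ≤ (2 * a) ^ γ := Real.rpow_le_rpow (ha.le.trans hay) hy hγ
      _ = 2 ^ |γ| * a ^ γ := by rw [abs_of_nonneg hγ, Real.mul_rpow zero_le_two ha.le]
  · calc y ^ γ ≤ a ^ γ := Real.rpow_le_rpow_of_nonpos ha hay hγ
      _ ≤ 2 ^ |γ| * a ^ γ :=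
        le_mul_of_one_le_left (by positivity) (Real.one_le_rpow one_le_two (abs_nonneg γ))

lemma setLAverage_rpow_mu1_Ioo_le_of_le_two_mul {γ a b : ℝ} (ha : 0 < a) (hb : b ≤ 2 * a) :
    ⨍⁻ y in Ioo a b, ENNReal.ofReal (y ^ γ) ∂(mu1 α) ≤ ENNReal.ofReal (2 ^ |γ| * a ^ γ) := by
  refine (laverage_le_essSup _).trans (essSup_le_of_ae_le _ ?_)
  filter_upwards [ae_restrict_mem measurableSet_Ioo] with y hy
  exact ENNReal.ofReal_le_ofReal
    (rpow_le_two_rpow_abs_mul_rpow γ ha hy.1.le (hy.2.le.trans hb))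

/-- Near the boundary, `μ(a, b)` is comparable to `μ(0, b)` because it contains `(b/2, b)`. -/
lemma setLAverage_rpow_mu1_Ioo_le_of_two_mul_le (hα : -1 < α) {γ a b : ℝ} (hγ : -1 < α + γ)
    (ha : 0 ≤ a) (hb : 0 < b) (hab : 2 * a ≤ b) :
    ⨍⁻ y in Ioo a b, ENNReal.ofReal (y ^ γ) ∂(mu1 α) ≤
      ENNReal.ofReal ((α + 1) / ((α + γ + 1) * (1 - 2 ^ (-(α + 1)))) * b ^ γ) := by
  have he₀ : 0 < α + 1 := by linarith
  have he : 0 < α + γ + 1 := by linarith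
  have hκ : 0 < 1 - (2 : ℝ) ^ (-(α + 1)) := by
    linarith [Real.rpow_lt_one_of_one_lt_of_neg one_lt_two (neg_lt_zero.mpr he₀)]
  have hmeasure : ENNReal.ofReal ((1 - 2 ^ (-(α + 1))) / (α + 1) * b ^ (α + 1)) ≤
      mu1 α (Ioo a b) := by
    calc ENNReal.ofReal ((1 - 2 ^ (-(α + 1))) / (α + 1) * b ^ (α + 1))
        = mu1 α (Ioo (b / 2) b) := by
          rw [mu1_Ioo hα (by positivity) (by linarith), Real.div_rpow hb.le zero_le_two,
            Real.rpow_neg zero_le_two]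
          congr 1
          ring
      _ ≤ mu1 α (Ioo a b) := measure_mono (Ioo_subset_Ioo_left (by linarith))
  have hintegral : ∫⁻ y in Ioo a b, ENNReal.ofReal (y ^ γ) ∂(mu1 α) ≤
      ENNReal.ofReal (b ^ (α + γ + 1) / (α + γ + 1)) := by
    calc ∫⁻ y in Ioo a b, ENNReal.ofReal (y ^ γ) ∂(mu1 α)
        ≤ ∫⁻ y in Ioo 0 b, ENNReal.ofReal (y ^ γ) ∂(mu1 α) :=
          lintegral_mono_set (Ioo_subset_Ioo_left ha)
      _ = ENNReal.ofReal (b ^ (α + γ + 1) / (α + γ + 1)) := by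
          rw [setLIntegral_rpow_mu1_Ioo hγ le_rfl hb.le, Real.zero_rpow he.ne', sub_zero]
  rw [setLAverage_eq]
  calc (∫⁻ y in Ioo a b, ENNReal.ofReal (y ^ γ) ∂(mu1 α)) / mu1 α (Ioo a b)
      ≤ ENNReal.ofReal (b ^ (α + γ + 1) / (α + γ + 1)) /
          ENNReal.ofReal ((1 - 2 ^ (-(α + 1))) / (α + 1) * b ^ (α + 1)) :=
        ENNReal.div_le_div hintegral hmeasure
    _ = ENNReal.ofReal ((α + 1) / ((α + γ + 1) * (1 - 2 ^ (-(α + 1)))) * b ^ γ) := by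
        rw [← ENNReal.ofReal_div_of_pos (by positivity)]
        congr 1
        rw [show α + γ + 1 = γ + (α + 1) by ring, Real.rpow_add hb]
        field_simp

lemma rpow_mul_rpow_le_ofReal_of_exponents_cancel {A B : ℝ≥0∞} {t c₁ c₂ a₁ a₂ s₁ s₂ : ℝ}
    (ht : 0 < t) (hc₁ : 0 ≤ c₁) (hc₂ : 0 ≤ c₂) (hs₁ : 0 ≤ s₁) (hs₂ : 0 ≤ s₂)
    (hcancel : a₁ * s₁ + a₂ * s₂ = 0)
    (hA : A ≤ ENNReal.ofReal (c₁ * t ^ a₁)) (hB : B ≤ ENNReal.ofReal (c₂ * t ^ a₂)) :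
    A ^ s₁ * B ^ s₂ ≤ ENNReal.ofReal (c₁ ^ s₁ * c₂ ^ s₂) := by
  calc A ^ s₁ * B ^ s₂
      ≤ ENNReal.ofReal (c₁ * t ^ a₁) ^ s₁ * ENNReal.ofReal (c₂ * t ^ a₂) ^ s₂ := by
        gcongr
    _ = ENNReal.ofReal ((c₁ * t ^ a₁) ^ s₁ * (c₂ * t ^ a₂) ^ s₂) := by
        rw [ENNReal.ofReal_rpow_of_nonneg (by positivity) hs₁,
          ENNReal.ofReal_rpow_of_nonneg (by positivity) hs₂, ENNReal.ofReal_mul (by positivity)]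
    _ = ENNReal.ofReal (c₁ ^ s₁ * c₂ ^ s₂) := by
        rw [Real.mul_rpow hc₁ (by positivity), Real.mul_rpow hc₂ (by positivity),
          ← Real.rpow_mul ht.le, ← Real.rpow_mul ht.le]
        congr 1
        calc c₁ ^ s₁ * t ^ (a₁ * s₁) * (c₂ ^ s₂ * t ^ (a₂ * s₂))
            = c₁ ^ s₁ * c₂ ^ s₂ * t ^ (a₁ * s₁ + a₂ * s₂) := by rw [Real.rpow_add ht]; ring
          _ = c₁ ^ s₁ * c₂ ^ s₂ := by rw [hcancel, Real.rpow_zero, mul_one]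

lemma exists_setLAverage_Ioo_product_le (hα : -1 < α) (hp : 1 < p) (hβ₁ : -α - 1 < β)
    (hβ₂ : β < (α + 1) * (p - 1)) :
    ∃ C : ℝ, ∀ a b : ℝ, 0 ≤ a → a < b →
      (⨍⁻ y in Ioo a b, ENNReal.ofReal (y ^ β) ∂(mu1 α)) *
        (⨍⁻ y in Ioo a b, ENNReal.ofReal (y ^ (β * (1 / (1 - p)))) ∂(mu1 α)) ^ (p - 1) ≤
          ENNReal.ofReal C := by
  set γ := β * (1 / (1 - p))
  have hp₁ : 0 < p - 1 := by linarith
  have hγ_eq : γ = -(β / (p - 1)) := by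
    simp only [γ]; rw [one_div, ← neg_sub, inv_neg]; ring
  have hγ : -1 < α + γ := by
    have : β / (p - 1) < α + 1 := (div_lt_iff₀ hp₁).mpr hβ₂
    linarith
  have hcancel : β * 1 + γ * (p - 1) = 0 := by
    rw [hγ_eq]; field_simp [hp₁.ne']; ring
  have hκ : 0 < 1 - (2 : ℝ) ^ (-(α + 1)) := by
    linarith [Real.rpow_lt_one_of_one_lt_of_neg one_lt_two (by linarith : -(α + 1) < 0)]
  let c : ℝ → ℝ := fun δ => (α + 1) / ((α + δ + 1) * (1 - 2 ^ (-(α + 1))))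
  have hc : ∀ δ, -1 < α + δ → 0 ≤ c δ := fun δ hδ =>
    div_nonneg (by linarith) (mul_pos (by linarith) hκ).le
  refine ⟨max (c β * c γ ^ (p - 1)) (2 ^ |β| * (2 ^ |γ|) ^ (p - 1)), fun a b ha hab => ?_⟩
  rcases le_or_gt (2 * a) b with hnear | hfar
  · have hb : 0 < b := ha.trans_lt hab
    have := rpow_mul_rpow_le_ofReal_of_exponents_cancel hb (hc β (by linarith)) (hc γ hγ)
      zero_le_one hp₁.le hcancel
      (setLAverage_rpow_mu1_Ioo_le_of_two_mul_le hα (by linarith) ha hb hnear)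
      (setLAverage_rpow_mu1_Ioo_le_of_two_mul_le hα hγ ha hb hnear)
    rw [ENNReal.rpow_one, Real.rpow_one] at this
    exact this.trans (ENNReal.ofReal_le_ofReal (le_max_left _ _))
  · have ha₀ : 0 < a := by linarith
    have := rpow_mul_rpow_le_ofReal_of_exponents_cancel ha₀ (by positivity) (by positivity)
      zero_le_one hp₁.le hcancel
      (setLAverage_rpow_mu1_Ioo_le_of_le_two_mul (α := α) ha₀ hfar.le)
      (setLAverage_rpow_mu1_Ioo_le_of_le_two_mul (α := α) ha₀ hfar.le)
    rw [ENNReal.rpow_one, Real.rpow_one] at this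
    exact this.trans (ENNReal.ofReal_le_ofReal (le_max_right _ _))

theorem ApHalfLineConst_rpow_lt_top (hα : -1 < α) (hp : 1 < p) (hβ₁ : -α - 1 < β)
    (hβ₂ : β < (α + 1) * (p - 1)) :
    ApHalfLineConst α p (fun y => y ^ β) < ⊤ := by
  obtain ⟨C, hC⟩ := exists_setLAverage_Ioo_product_le hα hp hβ₁ hβ₂
  refine lt_of_le_of_lt (iSup₂_le fun r hr => iSup₂_le fun x _ => ?_) (ofReal_lt_top (r := C))
  have ha : 0 ≤ max (x - r) 0 := le_max_right _ _
  have hdual : ∫⁻ y in Ioo (max (x - r) 0) (x + r), ENNReal.ofReal ((y ^ β) ^ (1 / (1 - p)))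
      ∂(mu1 α) = ∫⁻ y in Ioo (max (x - r) 0) (x + r),
        ENNReal.ofReal (y ^ (β * (1 / (1 - p)))) ∂(mu1 α) :=
    setLIntegral_congr_fun measurableSet_Ioo fun y hy => by
      rw [Real.rpow_mul (ha.trans hy.1.le)]
  simpa only [hdual, setLAverage_eq, ENNReal.div_eq_inv_mul] using
    hC _ _ ha (max_lt (by linarith) (by linarith))

theorem MpConst_rpow_lt_top (hp : 1 < p) (hβ : β < (α + 1) * (p - 1)) :
    MpConst α p (fun y => y ^ β) < ⊤ := by
  set γ₁ := -(p * (α + 1)) + β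
  set γ₂ := β * (-(1 / (p - 1)))
  have hp₁ : 0 < p - 1 := by linarith
  have hγ₁ : α + γ₁ < -1 := by simp only [γ₁]; linarith
  have hγ₂ : -1 < α + γ₂ := by
    have : β / (p - 1) < α + 1 := (div_lt_iff₀ hp₁).mpr hβ
    have : γ₂ = -(β / (p - 1)) := by simp only [γ₂]; ring
    linarith
  have hcancel : (α + γ₁ + 1) * (1 / p) + (α + γ₂ + 1) * (1 - 1 / p) = 0 := by
    simp only [γ₁, γ₂]; field_simp; ring
  refine lt_of_le_of_lt (iSup₂_le fun r hr => ?_) (ofReal_lt_top (r :=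
    (-(α + γ₁ + 1))⁻¹ ^ (1 / p) * (α + γ₂ + 1)⁻¹ ^ (1 - 1 / p)))
  have hfar : ∫⁻ y in Ioi r, ENNReal.ofReal (y ^ (-(p * (α + 1))) * y ^ β) ∂(mu1 α) =
      ENNReal.ofReal ((-(α + γ₁ + 1))⁻¹ * r ^ (α + γ₁ + 1)) := by
    calc ∫⁻ y in Ioi r, ENNReal.ofReal (y ^ (-(p * (α + 1))) * y ^ β) ∂(mu1 α)
        = ∫⁻ y in Ioi r, ENNReal.ofReal (y ^ γ₁) ∂(mu1 α) :=
          setLIntegral_congr_fun measurableSet_Ioi fun y hy => by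
            rw [Real.rpow_add (hr.trans hy)]
      _ = ENNReal.ofReal (-r ^ (α + γ₁ + 1) / (α + γ₁ + 1)) := setLIntegral_rpow_mu1_Ioi hγ₁ hr
      _ = ENNReal.ofReal ((-(α + γ₁ + 1))⁻¹ * r ^ (α + γ₁ + 1)) := by
          rw [neg_div, ← div_neg, div_eq_inv_mul]
  have hnear : ∫⁻ y in Ioo 0 r, ENNReal.ofReal ((y ^ β) ^ (-(1 / (p - 1)))) ∂(mu1 α) =
      ENNReal.ofReal ((α + γ₂ + 1)⁻¹ * r ^ (α + γ₂ + 1)) := by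
    calc ∫⁻ y in Ioo 0 r, ENNReal.ofReal ((y ^ β) ^ (-(1 / (p - 1)))) ∂(mu1 α)
        = ∫⁻ y in Ioo 0 r, ENNReal.ofReal (y ^ γ₂) ∂(mu1 α) :=
          setLIntegral_congr_fun measurableSet_Ioo fun y hy => by
            rw [← Real.rpow_mul hy.1.le]
      _ = ENNReal.ofReal ((r ^ (α + γ₂ + 1) - 0 ^ (α + γ₂ + 1)) / (α + γ₂ + 1)) :=
          setLIntegral_rpow_mu1_Ioo hγ₂ le_rfl hr.le
      _ = ENNReal.ofReal ((α + γ₂ + 1)⁻¹ * r ^ (α + γ₂ + 1)) := by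
          rw [Real.zero_rpow (by linarith), sub_zero, div_eq_inv_mul]
  exact rpow_mul_rpow_le_ofReal_of_exponents_cancel hr (inv_nonneg.mpr (by linarith))
    (inv_nonneg.mpr (by linarith)) (by positivity)
    (sub_nonneg.mpr ((div_le_one (by linarith)).mpr hp.le)) hcancel hfar.le hnear.le

end PowerWeight

/-- Remark 1.9: for `β ∈ (-α-1, (α+1)(p-1))` the power weight
`ω(y) = y^β` on `ℝ_+` belongs to `A_p(ℝ_+, μ) ∩ M_p(μ)`, where `μ(dy) = y^α dy`. -/
theorem power_weight_in_Ap_and_Mp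
    (α p β : ℝ) (hα : -1 < α) (hp : 1 < p)
    (hβ₁ : -α - 1 < β) (hβ₂ : β < (α + 1) * (p - 1)) :
    ApHalfLineConst α p (fun y => y ^ β) < ⊤ ∧
      MpConst α p (fun y => y ^ β) < ⊤ :=
  ⟨PowerWeight.ApHalfLineConst_rpow_lt_top hα hp hβ₁ hβ₂, PowerWeight.MpConst_rpow_lt_top hp hβ₂⟩
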